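/- arXiv:1308.6139 — 2 statements merged into one kernel-verified Lean document; each statement's English description precedes it below -/
import Mathlib

section
/- Let G be a self-complementary graph with an antimorphism τ containing a cycle (a_1 b_1 c_1 d_1 ... a_k b_k c_k d_k). Set A = {a_1,...,a_k}, B = {b_1,...,b_k}, C = {c_1,...,c_k}, D = {d_1,...,d_k}. Then either (i) there exist i, j such that {a_1, b_i, a_{1+j}, b_{i+j}} induces a P_4 for which (a_1 b_i a_{1+j} b_{i+j}) is an antimorphism, or (ii) (A,B,C,D) is a symmetric partition of G[A∪B∪C∪D], or (iii) (B,C,D,A) is a symmetric partition of G[A∪B∪C∪D]. -/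
/-
Since `τ⁴` is an automorphism moving every index up by one, whether `a i` and `b j` are adjacent
depends only on `j - i`; call it `F (j - i)`. Applying `τ` and `τ²`, the edges between `C` and
`D` copy those between `A` and `B`, while those between `B` and `C` and between `D` and `A` are
their complements. If `F` is constant, this gives one of the two symmetric partitions. Otherwise,
as `ZMod k` is a finite cycle, some `i, j` have `F i ≠ F (i + j) = F (i - j)`. On
`a 0, b i, a j, b (i + j)` the edges `a 0 b i` and `a j b (i + j)` then take one value, the edges
`a 0 b (i + j)` and `b i a j` the other, and `a 0 a j`, `b i b (i + j)` are complementary: exactly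
three edges, forming a `P₄` that the cycle `(a 0 b i a j b (i + j))` maps onto its complement.
-/

def IsAntimorphism {V : Type*} (G : SimpleGraph V) (τ : Equiv.Perm V) : Prop :=
  ∀ a b : V, a ≠ b → (G.Adj a b ↔ ¬ G.Adj (τ a) (τ b))

def InducesP4 {V : Type*} (G : SimpleGraph V) (s : Set V) : Prop :=
  ∃ w x y z : V, s = {w, x, y, z} ∧ w ≠ x ∧ w ≠ y ∧ w ≠ z ∧ x ≠ y ∧ x ≠ z ∧ y ≠ z ∧
    G.Adj w x ∧ G.Adj x y ∧ G.Adj y z ∧ ¬ G.Adj w y ∧ ¬ G.Adj w z ∧ ¬ G.Adj x z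

def cyc4 {V : Type*} [DecidableEq V] (p q r s : V) : V → V :=
  fun v => if v = p then q else if v = q then r else if v = r then s else
    if v = s then p else v

def IsP4Antimorphic {V : Type*} [DecidableEq V] (G : SimpleGraph V) (p q r s : V) : Prop :=
  InducesP4 G {p, q, r, s} ∧
  ∀ x ∈ ({p, q, r, s} : Set V), ∀ y ∈ ({p, q, r, s} : Set V), x ≠ y →
    (G.Adj x y ↔ ¬ G.Adj (cyc4 p q r s x) (cyc4 p q r s y))

/-- `(A,B,C,D)` is a symmetric partition of the subgraph of `G` induced by `A ∪ B ∪ C ∪ D`: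
four nonempty pairwise disjoint sets, all edges between `A,B` and between `C,D`, no edges
between `A,D` nor between `B,C`. -/
def IsSymmetricPartitionOn {V : Type*} (G : SimpleGraph V) (A B C D : Set V) : Prop :=
  A.Nonempty ∧ B.Nonempty ∧ C.Nonempty ∧ D.Nonempty ∧
  Disjoint A B ∧ Disjoint A C ∧ Disjoint A D ∧ Disjoint B C ∧ Disjoint B D ∧ Disjoint C D ∧
  (∀ x ∈ A, ∀ y ∈ B, G.Adj x y) ∧ (∀ x ∈ C, ∀ y ∈ D, G.Adj x y) ∧
  (∀ x ∈ A, ∀ y ∈ D, ¬ G.Adj x y) ∧ (∀ x ∈ B, ∀ y ∈ C, ¬ G.Adj x y)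

open Function Set

theorem IsAntimorphism.adj_apply_apply_iff {V : Type*} {G : SimpleGraph V} {τ : Equiv.Perm V}
    (hτ : IsAntimorphism G τ) (x y : V) : G.Adj (τ (τ x)) (τ (τ y)) ↔ G.Adj x y := by
  rcases eq_or_ne x y with rfl | hxy
  · simp
  · rw [hτ x y hxy, hτ (τ x) (τ y) (τ.injective.ne hxy), not_not]

theorem ZMod.iff_of_forall_iff_add_one {k : ℕ} {p : ZMod k → Prop}
    (h : ∀ x, p x ↔ p (x + 1)) (x y : ZMod k) : p x ↔ p y := by
  suffices ∀ x, p x ↔ p 0 from (this x).trans (this y).symm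
  intro x
  obtain ⟨n, rfl⟩ := ZMod.intCast_surjective x
  induction n using Int.induction_on with
  | zero => simp
  | succ n ih => rwa [Int.cast_add, Int.cast_one, ← h]
  | pred n ih => rwa [Int.cast_sub, Int.cast_one, h, sub_add_cancel]

theorem ZMod.iff_sub_of_forall_iff_add_one {k : ℕ} {R : ZMod k → ZMod k → Prop}
    (h : ∀ i j, R i j ↔ R (i + 1) (j + 1)) (i j : ZMod k) : R i j ↔ R 0 (j - i) := by
  simpa using ZMod.iff_of_forall_iff_add_one (p := fun t => R t (t + (j - i)))
    (fun t => by simpa only [add_right_comm t 1] using h t (t + (j - i))) i 0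

theorem ZMod.exists_iff_not_add_and_sub_iff_add {k : ℕ} [NeZero k] {F : ZMod k → Prop}
    (u v : ZMod k) (hu : F u) (hv : ¬ F v) :
    ∃ i j, (F i ↔ ¬ F (i + j)) ∧ (F (i - j) ↔ F (i + j)) := by
  obtain ⟨i, hi⟩ : ∃ i, ¬ (F i ↔ F (i + 1)) := by
    by_contra! h
    exact hv ((ZMod.iff_of_forall_iff_add_one h u v).1 hu)
  -- Otherwise `F` keeps its value on each side of the boundary between `i` and `i + 1`, however
  -- far one walks from it; walking once around the cycle contradicts the boundary.
  by_contra hF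
  have hF' : ∀ i j, (F i ↔ ¬ F (i + j)) → ¬ (F (i - j) ↔ F (i + j)) :=
    fun i j h₁ h₂ => hF ⟨i, j, h₁, h₂⟩
  have hwalk : ∀ n : ℕ, (F (i - n) ↔ F i) ∧ (F (i + 1 + n) ↔ F (i + 1)) := by
    intro n
    induction n with
    | zero => simp
    | succ n ih =>
      have h₁ := hF' i (n + 1)
      have h₂ := hF' (i + 1) (-(n + 1))
      rw [show i + (n + 1) = i + 1 + n by ring] at h₁
      rw [show i + 1 - -((n : ZMod k) + 1) = i + 1 + (n + 1) by ring,
        show i + 1 + -((n : ZMod k) + 1) = i - n by ring] at h₂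
      push_cast
      constructor <;> tauto
  have h := (hwalk (-1 : ZMod k).val).2
  rw [ZMod.natCast_zmod_val, add_neg_cancel_right] at h
  exact hi h

theorem isP4Antimorphic_of_adj_iff {V : Type*} [DecidableEq V] {G : SimpleGraph V}
    {p q r s : V} (hpq : p ≠ q) (hpr : p ≠ r) (hps : p ≠ s) (hqr : q ≠ r) (hqs : q ≠ s)
    (hrs : r ≠ s) (h_rs : G.Adj r s ↔ G.Adj p q) (h_ps : G.Adj p s ↔ ¬ G.Adj p q)
    (h_qr : G.Adj q r ↔ ¬ G.Adj p q) (h_qs : G.Adj q s ↔ ¬ G.Adj p r) :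
    IsP4Antimorphic G p q r s := by
  have adj_comm_iff : (G.Adj q p ↔ G.Adj p q) ∧ (G.Adj r p ↔ G.Adj p r) ∧
      (G.Adj s p ↔ G.Adj p s) ∧ (G.Adj r q ↔ G.Adj q r) ∧ (G.Adj s q ↔ G.Adj q s) ∧
      (G.Adj s r ↔ G.Adj r s) := ⟨G.adj_comm _ _, G.adj_comm _ _, G.adj_comm _ _,
    G.adj_comm _ _, G.adj_comm _ _, G.adj_comm _ _⟩
  constructor
  · by_cases hX : G.Adj p q <;> by_cases hY : G.Adj p r
    · refine ⟨q, p, r, s, Set.insert_comm _ _ _, hpq.symm, hqr, hqs, hpr, hps, hrs, ?_⟩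
      simp [adj_comm_iff, h_rs, h_ps, h_qr, h_qs, hX, hY]
    · refine ⟨p, q, s, r, by rw [Set.pair_comm], hpq, hps, hpr, hqs, hqr, hrs.symm, ?_⟩
      simp [adj_comm_iff, h_rs, h_ps, h_qr, h_qs, hX, hY]
    · refine ⟨q, r, p, s, by rw [Set.insert_comm p q, Set.insert_comm p r],
        hqr, hpq.symm, hqs, hpr.symm, hrs, hps, ?_⟩
      simp [adj_comm_iff, h_rs, h_ps, h_qr, h_qs, hX, hY]
    · refine ⟨p, s, q, r, by rw [Set.pair_comm r s, Set.insert_comm q s],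
        hps, hpq, hpr, hqs.symm, hrs.symm, hqr, ?_⟩
      simp [adj_comm_iff, h_rs, h_ps, h_qr, h_qs, hX, hY]
  · have ep : cyc4 p q r s p = q := by simp [cyc4]
    have eq : cyc4 p q r s q = r := by simp [cyc4, hpq.symm]
    have er : cyc4 p q r s r = s := by simp [cyc4, hpr.symm, hqr.symm]
    have es : cyc4 p q r s s = p := by simp [cyc4, hps.symm, hqs.symm, hrs.symm]
    intro x hx y hy hxy
    simp only [Set.mem_insert_iff, Set.mem_singleton_iff] at hx hy
    rcases hx with rfl | rfl | rfl | rfl <;> rcases hy with rfl | rfl | rfl | rfl <;>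
      first
        | exact absurd rfl hxy
        | simp only [ep, eq, er, es, adj_comm_iff, h_rs, h_ps, h_qr, h_qs, not_not]

theorem isSymmetricPartitionOn_range {ι V : Type*} [Nonempty ι] {G : SimpleGraph V}
    {a b c d : ι → V} (hinj : Injective (fun p : Fin 4 × ι => ![a, b, c, d] p.1 p.2))
    (hAB : ∀ i j, G.Adj (a i) (b j)) (hCD : ∀ i j, G.Adj (c i) (d j))
    (hAD : ∀ i j, ¬ G.Adj (a i) (d j)) (hBC : ∀ i j, ¬ G.Adj (b i) (c j)) :
    IsSymmetricPartitionOn G (range a) (range b) (range c) (range d) := by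
  have hdisj : ∀ L M : Fin 4, L ≠ M →
      Disjoint (range (![a, b, c, d] L)) (range (![a, b, c, d] M)) := fun L M hLM =>
    disjoint_range_iff.2 fun i j h =>
      hLM (congrArg Prod.fst (hinj (a₁ := (L, i)) (a₂ := (M, j)) h))
  exact ⟨range_nonempty a, range_nonempty b, range_nonempty c, range_nonempty d,
    hdisj 0 1 (by decide), hdisj 0 2 (by decide), hdisj 0 3 (by decide),
    hdisj 1 2 (by decide), hdisj 1 3 (by decide), hdisj 2 3 (by decide),
    forall_mem_range.2 fun i => forall_mem_range.2 (hAB i),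
    forall_mem_range.2 fun i => forall_mem_range.2 (hCD i),
    forall_mem_range.2 fun i => forall_mem_range.2 (hAD i),
    forall_mem_range.2 fun i => forall_mem_range.2 (hBC i)⟩

theorem injective_uncurry_rotate {ι V : Type*} {a b c d : ι → V}
    (hinj : Injective (fun p : Fin 4 × ι => ![a, b, c, d] p.1 p.2)) :
    Injective (fun p : Fin 4 × ι => ![b, c, d, a] p.1 p.2) := by
  convert hinj.comp ((add_left_injective (1 : Fin 4)).prodMap injective_id) using 1
  ext ⟨L, i⟩
  fin_cases L <;> rfl

structure IsQuadCycle {V : Type*} {k : ℕ} (τ : Equiv.Perm V) (a b c d : ZMod k → V) :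
    Prop where
  apply_a : ∀ i, τ (a i) = b i
  apply_b : ∀ i, τ (b i) = c i
  apply_c : ∀ i, τ (c i) = d i
  apply_d : ∀ i, τ (d i) = a (i + 1)

namespace IsQuadCycle

variable {V : Type*} {G : SimpleGraph V} {τ : Equiv.Perm V} {k : ℕ} {a b c d : ZMod k → V}

theorem apply_apply_a (hC : IsQuadCycle τ a b c d) (i : ZMod k) : τ (τ (a i)) = c i := by
  rw [hC.apply_a, hC.apply_b]

theorem apply_apply_b (hC : IsQuadCycle τ a b c d) (i : ZMod k) : τ (τ (b i)) = d i := by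
  rw [hC.apply_b, hC.apply_c]

theorem apply_apply_c (hC : IsQuadCycle τ a b c d) (i : ZMod k) : τ (τ (c i)) = a (i + 1) := by
  rw [hC.apply_c, hC.apply_d]

theorem apply_apply_d (hC : IsQuadCycle τ a b c d) (i : ZMod k) : τ (τ (d i)) = b (i + 1) := by
  rw [hC.apply_d, hC.apply_a]

theorem adj_cd_iff (hτ : IsAntimorphism G τ) (hC : IsQuadCycle τ a b c d) (i j : ZMod k) :
    G.Adj (c i) (d j) ↔ G.Adj (a i) (b j) := by
  rw [← hC.apply_apply_a, ← hC.apply_apply_b, hτ.adj_apply_apply_iff]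

theorem adj_da_add_one_iff (hτ : IsAntimorphism G τ) (hC : IsQuadCycle τ a b c d)
    (i j : ZMod k) : G.Adj (d i) (a (j + 1)) ↔ G.Adj (b i) (c j) := by
  rw [← hC.apply_apply_b, ← hC.apply_apply_c, hτ.adj_apply_apply_iff]

theorem adj_ab_add_one_iff (hτ : IsAntimorphism G τ) (hC : IsQuadCycle τ a b c d)
    (i j : ZMod k) : G.Adj (a (i + 1)) (b (j + 1)) ↔ G.Adj (a i) (b j) := by
  rw [← hC.apply_apply_c, ← hC.apply_apply_d, hτ.adj_apply_apply_iff, hC.adj_cd_iff hτ]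

theorem adj_aa_add_one_iff (hτ : IsAntimorphism G τ) (hC : IsQuadCycle τ a b c d)
    (i j : ZMod k) : G.Adj (a (i + 1)) (a (j + 1)) ↔ G.Adj (a i) (a j) := by
  rw [← hC.apply_apply_c, ← hC.apply_apply_c, hτ.adj_apply_apply_iff, ← hC.apply_apply_a,
    ← hC.apply_apply_a, hτ.adj_apply_apply_iff]

theorem adj_ab_iff (hτ : IsAntimorphism G τ) (hC : IsQuadCycle τ a b c d) (i j : ZMod k) :
    G.Adj (a i) (b j) ↔ G.Adj (a 0) (b (j - i)) :=
  ZMod.iff_sub_of_forall_iff_add_one (fun i j => (hC.adj_ab_add_one_iff hτ i j).symm) i j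

theorem adj_aa_iff (hτ : IsAntimorphism G τ) (hC : IsQuadCycle τ a b c d) (i j : ZMod k) :
    G.Adj (a i) (a j) ↔ G.Adj (a 0) (a (j - i)) :=
  ZMod.iff_sub_of_forall_iff_add_one (fun i j => (hC.adj_aa_add_one_iff hτ i j).symm) i j

theorem adj_bc_iff (hτ : IsAntimorphism G τ) (hC : IsQuadCycle τ a b c d)
    (hab : ∀ i j, a i ≠ b j) (i j : ZMod k) : G.Adj (b i) (c j) ↔ ¬ G.Adj (a i) (b j) := by
  rw [hτ _ _ (hab i j), hC.apply_a, hC.apply_b, not_not]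

theorem adj_da_iff (hτ : IsAntimorphism G τ) (hC : IsQuadCycle τ a b c d)
    (hab : ∀ i j, a i ≠ b j) (i j : ZMod k) :
    G.Adj (d i) (a j) ↔ ¬ G.Adj (a i) (b (j - 1)) := by
  rw [← hC.adj_bc_iff hτ hab, ← hC.adj_da_add_one_iff hτ, sub_add_cancel]

theorem adj_bb_iff (hτ : IsAntimorphism G τ) (hC : IsQuadCycle τ a b c d) (ha : Injective a)
    {i j : ZMod k} (hij : i ≠ j) : G.Adj (b i) (b j) ↔ ¬ G.Adj (a i) (a j) := by
  rw [hτ _ _ (ha.ne hij), hC.apply_a, hC.apply_a, not_not]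

theorem isSymmetricPartitionOn_of_forall_adj (hτ : IsAntimorphism G τ)
    (hC : IsQuadCycle τ a b c d)
    (hinj : Injective (fun p : Fin 4 × ZMod k => ![a, b, c, d] p.1 p.2))
    (hab : ∀ i j, a i ≠ b j) (hall : ∀ t, G.Adj (a 0) (b t)) :
    IsSymmetricPartitionOn G (range a) (range b) (range c) (range d) := by
  refine isSymmetricPartitionOn_range hinj ?_ ?_ ?_ ?_ <;> intro i j
  · exact (hC.adj_ab_iff hτ i j).2 (hall _)
  · exact (hC.adj_cd_iff hτ i j).2 ((hC.adj_ab_iff hτ i j).2 (hall _))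
  · rw [G.adj_comm, hC.adj_da_iff hτ hab, not_not, hC.adj_ab_iff hτ]; exact hall _
  · rw [hC.adj_bc_iff hτ hab, not_not, hC.adj_ab_iff hτ]; exact hall _

theorem isSymmetricPartitionOn_of_forall_not_adj (hτ : IsAntimorphism G τ)
    (hC : IsQuadCycle τ a b c d)
    (hinj : Injective (fun p : Fin 4 × ZMod k => ![a, b, c, d] p.1 p.2))
    (hab : ∀ i j, a i ≠ b j) (hnone : ∀ t, ¬ G.Adj (a 0) (b t)) :
    IsSymmetricPartitionOn G (range b) (range c) (range d) (range a) := by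
  refine isSymmetricPartitionOn_range (injective_uncurry_rotate hinj) ?_ ?_ ?_ ?_ <;> intro i j
  · rw [hC.adj_bc_iff hτ hab, hC.adj_ab_iff hτ]; exact hnone _
  · rw [hC.adj_da_iff hτ hab, hC.adj_ab_iff hτ]; exact hnone _
  · rw [G.adj_comm, hC.adj_ab_iff hτ]; exact hnone _
  · rw [hC.adj_cd_iff hτ, hC.adj_ab_iff hτ]; exact hnone _

theorem isP4Antimorphic [DecidableEq V] (hτ : IsAntimorphism G τ)
    (hC : IsQuadCycle τ a b c d) (ha : Injective a) (hb : Injective b) (hab : ∀ i j, a i ≠ b j)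
    {i j : ZMod k}
    (hflip : G.Adj (a 0) (b i) ↔ ¬ G.Adj (a 0) (b (i + j)))
    (hsym : G.Adj (a 0) (b (i - j)) ↔ G.Adj (a 0) (b (i + j))) :
    IsP4Antimorphic G (a 0) (b i) (a j) (b (i + j)) := by
  have hj : j ≠ 0 := by rintro rfl; simp at hflip
  have hi : i ≠ i + j := by simpa using hj
  refine isP4Antimorphic_of_adj_iff (hab 0 i) (ha.ne hj.symm) (hab 0 (i + j))
    (fun h => hab j i h.symm) (hb.ne hi) (hab j (i + j)) ?_ ?_ ?_ ?_
  · rw [hC.adj_ab_iff hτ, add_sub_cancel_right]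
  · rw [hflip, not_not]
  · rw [G.adj_comm, hC.adj_ab_iff hτ, hsym, hflip, not_not]
  · rw [hC.adj_bb_iff hτ ha hi, hC.adj_aa_iff hτ, add_sub_cancel_left]

end IsQuadCycle

theorem main_lemma {V : Type*} [DecidableEq V] (G : SimpleGraph V) (τ : Equiv.Perm V)
    (hτ : IsAntimorphism G τ) (k : ℕ) (hk : 1 ≤ k) (a b c d : ZMod k → V)
    (hinj : Function.Injective (fun p : Fin 4 × ZMod k => ![a, b, c, d] p.1 p.2))
    (hab : ∀ i, τ (a i) = b i) (hbc : ∀ i, τ (b i) = c i)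
    (hcd : ∀ i, τ (c i) = d i) (hda : ∀ i, τ (d i) = a (i + 1)) :
    (∃ i j : ZMod k, IsP4Antimorphic G (a 0) (b i) (a j) (b (i + j))) ∨
    IsSymmetricPartitionOn G (Set.range a) (Set.range b) (Set.range c) (Set.range d) ∨
    IsSymmetricPartitionOn G (Set.range b) (Set.range c) (Set.range d) (Set.range a) := by
  have hC : IsQuadCycle τ a b c d := ⟨hab, hbc, hcd, hda⟩
  have ha : Injective a := fun i j h => congrArg Prod.snd (hinj (a₁ := (0, i)) (a₂ := (0, j)) h)
  have hb : Injective b := fun i j h => congrArg Prod.snd (hinj (a₁ := (1, i)) (a₂ := (1, j)) h)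
  have hne : ∀ i j, a i ≠ b j := fun i j h =>
    absurd (congrArg Prod.fst (hinj (a₁ := (0, i)) (a₂ := (1, j)) h)) Fin.zero_ne_one
  by_cases hall : ∀ t, G.Adj (a 0) (b t)
  · exact Or.inr (Or.inl (hC.isSymmetricPartitionOn_of_forall_adj hτ hinj hne hall))
  by_cases hnone : ∀ t, ¬ G.Adj (a 0) (b t)
  · exact Or.inr (Or.inr (hC.isSymmetricPartitionOn_of_forall_not_adj hτ hinj hne hnone))
  simp only [not_forall, not_not] at hall hnone
  obtain ⟨v, hv⟩ := hall
  obtain ⟨u, hu⟩ := hnone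
  have : NeZero k := ⟨by omega⟩
  obtain ⟨i, j, hflip, hsym⟩ := ZMod.exists_iff_not_add_and_sub_iff_add
    (F := fun t => G.Adj (a 0) (b t)) u v hu hv
  exact Or.inl ⟨i, j, hC.isP4Antimorphic hτ ha hb hne hflip hsym⟩
end

section
/- Let G be a self-complementary graph whose antimorphism τ is the product of a 4-cycle (a b c d) and one other cycle, where the edges of G among {a,b,c,d} are exactly ab, ac, cd. If a is adjacent to every vertex outside {a,b,c,d}, then ({b}, {d}, {a,c}, V(G) \ {a,b,c,d}) is a skew partition of G. -/
def IsSkewPartition {V : Type*} (G : SimpleGraph V) (A B C D : Set V) : Prop :=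
  (A.Nonempty ∧ B.Nonempty ∧ C.Nonempty ∧ D.Nonempty ∧
   Disjoint A B ∧ Disjoint A C ∧ Disjoint A D ∧ Disjoint B C ∧ Disjoint B D ∧ Disjoint C D ∧
   (∀ x ∈ A, ∀ y ∈ B, ¬ G.Adj x y) ∧ (∀ x ∈ C, ∀ y ∈ D, G.Adj x y)) ∧
  A ∪ B ∪ C ∪ D = Set.univ

/-!
Since `τ` permutes `{a, b, c, d}`, it also permutes the remaining vertices. An antimorphism
turns "adjacent to every outside vertex" into "adjacent to no outside vertex" and back, so from
`a` being complete to the outside we get that `b = τ a` is anticomplete and `c = τ b` complete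
to it. Together with `bd ∉ E(G)` this is the skew partition.
-/

theorem Equiv.Perm.symm_apply_notMem_of_mapsTo {V : Type*} {τ : Equiv.Perm V} {S : Set V}
    (hS : Set.MapsTo τ S S) {v : V} (hv : v ∉ S) : τ.symm v ∉ S :=
  fun h => hv (by simpa using hS h)

namespace IsAntimorphism

variable {V : Type*} {G : SimpleGraph V} {τ : Equiv.Perm V}

theorem not_adj_apply_of_adj (hτ : IsAntimorphism G τ) {x y : V} (h : G.Adj x y) :
    ¬ G.Adj (τ x) (τ y) :=
  (hτ x y h.ne).mp h

theorem adj_apply_of_not_adj (hτ : IsAntimorphism G τ) {x y : V} (hne : x ≠ y)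
    (h : ¬ G.Adj x y) : G.Adj (τ x) (τ y) :=
  not_not.mp (mt (hτ x y hne).mpr h)

theorem forall_not_adj_apply_of_forall_adj (hτ : IsAntimorphism G τ) {S : Set V}
    (hS : Set.MapsTo τ S S) {x : V} (h : ∀ v ∉ S, G.Adj x v) :
    ∀ v ∉ S, ¬ G.Adj (τ x) v := by
  intro v hv
  simpa using hτ.not_adj_apply_of_adj (h _ (Equiv.Perm.symm_apply_notMem_of_mapsTo hS hv))

theorem forall_adj_apply_of_forall_not_adj (hτ : IsAntimorphism G τ) {S : Set V}
    (hS : Set.MapsTo τ S S) {x : V} (hx : x ∈ S) (h : ∀ v ∉ S, ¬ G.Adj x v) :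
    ∀ v ∉ S, G.Adj (τ x) v := by
  intro v hv
  have hv' := Equiv.Perm.symm_apply_notMem_of_mapsTo hS hv
  simpa using hτ.adj_apply_of_not_adj (ne_of_mem_of_not_mem hx hv') (h _ hv')

end IsAntimorphism

theorem isSkewPartition_of_complete_to_outside {V : Type*} {G : SimpleGraph V} {a b c d : V}
    (habcd : [a, b, c, d].Nodup) (nbd : ¬ G.Adj b d)
    (houtside : (Set.univ \ {a, b, c, d} : Set V).Nonempty)
    (ha : ∀ v ∉ ({a, b, c, d} : Set V), G.Adj a v)
    (hc : ∀ v ∉ ({a, b, c, d} : Set V), G.Adj c v) :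
    IsSkewPartition G {b} {d} {a, c} (Set.univ \ {a, b, c, d}) := by
  simp only [List.nodup_cons, List.mem_cons, List.not_mem_nil, or_false, not_or] at habcd
  obtain ⟨⟨hab, hac, had⟩, ⟨hbc, hbd⟩, hcd, -⟩ := habcd
  refine ⟨⟨Set.singleton_nonempty b, Set.singleton_nonempty d, Set.insert_nonempty a {c},
    houtside, ?_, ?_, ?_, ?_, ?_, ?_, ?_, ?_⟩, ?_⟩
  · simpa using hbd
  · simp [Ne.symm hab, hbc]
  · simp
  · simp [Ne.symm had, Ne.symm hcd]
  · simp
  · rw [Set.disjoint_left]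
    rintro x (rfl | rfl) <;> simp
  · rintro x rfl y rfl
    exact nbd
  · rintro x (rfl | rfl) y ⟨-, hy⟩
    exacts [ha y hy, hc y hy]
  · ext v
    by_cases hv : v ∈ ({a, b, c, d} : Set V) <;> aesop

theorem case_Na_all_general {V : Type*} (G : SimpleGraph V) (τ : Equiv.Perm V)
    (hτ : IsAntimorphism G τ)
    (a b c d : V) (habcd : [a, b, c, d].Nodup)
    (h1 : τ a = b) (h2 : τ b = c) (h3 : τ c = d) (h4 : τ d = a)
    (m : ℕ) (e : ZMod m → V)
    (hdisj : ∀ i, e i ∉ ({a, b, c, d} : Set V))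
    (nbd : ¬ G.Adj b d)
    (hNa : ∀ v : V, v ∉ ({a, b, c, d} : Set V) → G.Adj a v) :
    IsSkewPartition G {b} {d} {a, c} (Set.univ \ {a, b, c, d}) := by
  have hS : Set.MapsTo τ {a, b, c, d} {a, b, c, d} := by
    rintro x (rfl | rfl | rfl | rfl) <;> simp [h1, h2, h3, h4]
  have hb : ∀ v ∉ ({a, b, c, d} : Set V), ¬ G.Adj b v :=
    h1 ▸ hτ.forall_not_adj_apply_of_forall_adj hS hNa
  have hc : ∀ v ∉ ({a, b, c, d} : Set V), G.Adj c v :=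
    h2 ▸ hτ.forall_adj_apply_of_forall_not_adj hS (by simp) hb
  exact isSkewPartition_of_complete_to_outside habcd nbd ⟨e 0, by simpa using hdisj 0⟩ hNa hc

theorem case_Na_all {V : Type*} (G : SimpleGraph V) (τ : Equiv.Perm V)
    (hτ : IsAntimorphism G τ)
    (a b c d : V) (habcd : [a, b, c, d].Nodup)
    (h1 : τ a = b) (h2 : τ b = c) (h3 : τ c = d) (h4 : τ d = a)
    (m : ℕ) (hm : 1 ≤ m) (e : ZMod m → V) (he : Function.Injective e)
    (hec : ∀ i, τ (e i) = e (i + 1))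
    (hdisj : ∀ i, e i ∉ ({a, b, c, d} : Set V))
    (hcover : ∀ v : V, v ∈ ({a, b, c, d} : Set V) ∨ v ∈ Set.range e)
    (eab : G.Adj a b) (eac : G.Adj a c) (ecd : G.Adj c d)
    (nad : ¬ G.Adj a d) (nbc : ¬ G.Adj b c) (nbd : ¬ G.Adj b d)
    (hNa : ∀ v : V, v ∉ ({a, b, c, d} : Set V) → G.Adj a v) :
    IsSkewPartition G {b} {d} {a, c} (Set.univ \ {a, b, c, d}) :=
  case_Na_all_general G τ hτ a b c d habcd h1 h2 h3 h4 m e hdisj nbd hNa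
end
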